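/- Let M and N be matroids on the same finite ground set E. Then every flat of N is a flat of M if and only if there is no circuit C of M and no cocircuit D of N such that C and D intersect in exactly one element. -/

import Mathlib

/-- A circuit of a matroid: a minimal dependent set. -/
def Matroid.IsCircuit' {α : Type*} (M : Matroid α) (C : Set α) : Prop :=
  M.Dep C ∧ ∀ D, M.Dep D → D ⊆ C → D = C

/-- A cocircuit of a matroid: a circuit of the dual matroid. -/
def Matroid.IsCocircuit' {α : Type*} (M : Matroid α) (C : Set α) : Prop :=
  M✶.IsCircuit' C

/-- The rank of a set in a matroid: the largest cardinality of an independent subset. -/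
noncomputable def Matroid.rk' {α : Type*} (M : Matroid α) (A : Set α) : ℕ :=
  sSup {n : ℕ | ∃ I, I ⊆ A ∧ M.Indep I ∧ I.ncard = n}

/-- `e` is the minimum element of the set `C`. -/
def IsMinOf {α : Type*} [LinearOrder α] (C : Set α) (e : α) : Prop :=
  e ∈ C ∧ ∀ x ∈ C, e ≤ x

/-- `Int_M(A)`: internally active elements of `A` w.r.t. `M`
(the ground set is the whole type, so `E ∖ A = Aᶜ`). -/
def IntSet {α : Type*} [LinearOrder α] (M : Matroid α) (A : Set α) : Set α :=
  {e | e ∈ A ∧ ∃ C, M.IsCocircuit' C ∧ C ⊆ Aᶜ ∪ {e} ∧ IsMinOf C e}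

/-- `Ext_M(A)`: externally active elements w.r.t. `M`. -/
def ExtSet {α : Type*} [LinearOrder α] (M : Matroid α) (A : Set α) : Set α :=
  {e | e ∉ A ∧ ∃ C, M.IsCircuit' C ∧ C ⊆ A ∪ {e} ∧ IsMinOf C e}

/-- `P_M(A)`: smallest elements of cocircuits of `M` contained in `E ∖ A`. -/
def PActSet {α : Type*} [LinearOrder α] (M : Matroid α) (A : Set α) : Set α :=
  {e | e ∉ A ∧ ∃ C, M.IsCocircuit' C ∧ C ⊆ Aᶜ ∧ IsMinOf C e}

/-- `Q_M(A)`: smallest elements of circuits of `M` contained in `A`. -/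
def QActSet {α : Type*} [LinearOrder α] (M : Matroid α) (A : Set α) : Set α :=
  {e | e ∈ A ∧ ∃ C, M.IsCircuit' C ∧ C ⊆ A ∧ IsMinOf C e}


/-! If `F` is a flat of `N` but not of `M`, pick `e ∈ cl_M(F) \ F`: some `M`-circuit through `e`
lies in `F ∪ {e}`, and, `F` being an `N`-flat, some `N`-cocircuit through `e` avoids `F`; the two
meet exactly in `e`. Conversely, if an `M`-circuit `C` meets an `N`-cocircuit `D` only in `e`, then
`E \ D` is a flat of `N` containing `C \ {e}` but not `e`, so it is not closed in `M`. -/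

open Set

namespace Matroid

variable {α : Type*} {M N : Matroid α} {C F K : Set α} {e : α}

lemma isCircuit'_iff_isCircuit : M.IsCircuit' C ↔ M.IsCircuit C := by
  rw [isCircuit_iff]
  rfl

lemma isCocircuit'_iff_isCocircuit : M.IsCocircuit' K ↔ M.IsCocircuit K :=
  isCircuit'_iff_isCircuit

lemma IsCircuit.subset_isFlat_of_sdiff_singleton_subset (hC : M.IsCircuit C) (hF : M.IsFlat F)
    (hCF : C \ {e} ⊆ F) : C ⊆ F :=
  (hC.subset_closure_sdiff_singleton e).trans (hF.closure ▸ M.closure_subset_closure hCF)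

lemma IsCocircuit.isFlat_ground_sdiff (hK : M.IsCocircuit K) : M.IsFlat (M.E \ K) := by
  rw [isFlat_iff_closure_eq]
  refine subset_antisymm (fun x hx ↦ by_contra fun hxF ↦ ?_) (M.subset_closure _)
  have hxE : x ∈ M.E := M.closure_subset_ground _ hx
  have hxK : x ∈ K := by simpa [hxE] using hxF
  have hmin := isCocircuit_iff_minimal_compl_nonspanning.1 hK
  -- minimality of `K` makes `insert x (M.E \ K)` spanning, and `x` is already in the closure
  have hsp : M.Spanning (M.E \ (K \ {x})) :=
    not_not.1 <| hmin.not_prop_of_ssubset <| sdiff_singleton_ssubset.2 hxK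
  rw [sdiff_sdiff_eq_sdiff_union (singleton_subset_iff.2 hxE), union_singleton,
    spanning_iff_closure_eq, closure_insert_eq_of_mem_closure hx, ← spanning_iff_closure_eq] at hsp
  exact hmin.prop hsp

lemma IsFlat.exists_isCocircuit_mem_disjoint (hF : M.IsFlat F) (he : e ∈ M.E) (heF : e ∉ F) :
    ∃ K, M.IsCocircuit K ∧ e ∈ K ∧ Disjoint K F := by
  obtain ⟨J, hJ⟩ := M.exists_isBasis F
  have heJ : e ∉ J := fun h ↦ heF (hJ.subset h)
  have hindep : M.Indep (insert e J) := by
    rw [hJ.indep.insert_indep_iff_of_notMem heJ, hJ.closure_eq_closure, hF.closure]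
    exact ⟨he, heF⟩
  obtain ⟨B, hB, hJB⟩ := hindep.exists_isBase_superset
  have heB : e ∈ B := hJB (mem_insert e J)
  refine ⟨_, hB.compl_closure_sdiff_singleton_isCocircuit heB,
    ⟨he, hB.indep.notMem_closure_sdiff_of_mem heB⟩, ?_⟩
  have hFcl : F ⊆ M.closure (B \ {e}) := by
    rw [← hF.closure, ← hJ.closure_eq_closure]
    refine M.closure_subset_closure fun x hx ↦ ⟨hJB (mem_insert_of_mem e hx), ?_⟩
    rintro rfl
    exact heJ hx
  exact disjoint_sdiff_left.mono_right hFcl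

theorem forall_isFlat_imp_isFlat_iff (hE : M.E = N.E) :
    (∀ F, N.IsFlat F → M.IsFlat F) ↔
      ∀ C K e, M.IsCircuit C → N.IsCocircuit K → C ∩ K ≠ {e} := by
  constructor
  · intro h C K e hC hK hCK
    have heCK : e ∈ C ∩ K := hCK.symm.subset rfl
    have hsub : C \ {e} ⊆ N.E \ K := fun x hx ↦
      ⟨hE ▸ hC.subset_ground hx.1, fun hxK ↦ hx.2 (hCK.subset ⟨hx.1, hxK⟩)⟩
    exact (hC.subset_isFlat_of_sdiff_singleton_subset (h _ hK.isFlat_ground_sdiff) hsub heCK.1).2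
      heCK.2
  · intro h F hF
    rw [isFlat_iff_closure_eq]
    refine subset_antisymm (fun e he ↦ by_contra fun heF ↦ ?_)
      (M.subset_closure F (hE ▸ hF.subset_ground))
    obtain ⟨C, hCF, hC, heC⟩ := (mem_closure_iff_exists_isCircuit heF).1 he
    obtain ⟨K, hK, heK, hKF⟩ :=
      hF.exists_isCocircuit_mem_disjoint (hE ▸ M.closure_subset_ground F he) heF
    refine h C K e hC hK (subset_antisymm (fun x ⟨hxC, hxK⟩ ↦ ?_) (by simp [heC, heK]))
    exact (hCF hxC).resolve_right (hKF.notMem_of_mem_left hxK)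

end Matroid

open Matroid

theorem stmt0_general {α : Type*} (M N : Matroid α)
    (hME : M.E = Set.univ) (hNE : N.E = Set.univ) :
    (∀ F, N.IsFlat F → M.IsFlat F) ↔
      ¬ ∃ C D e, M.IsCircuit' C ∧ N.IsCocircuit' D ∧ C ∩ D = {e} := by
  simp only [isCircuit'_iff_isCircuit, isCocircuit'_iff_isCocircuit, not_exists, not_and]
  exact forall_isFlat_imp_isFlat_iff (hME.trans hNE.symm)

/-- Every flat of `N` is a flat of `M` iff no circuit of `M` and cocircuit of `N`
intersect in exactly one element. -/
theorem stmt0 {α : Type*} [Fintype α] (M N : Matroid α)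
    (hME : M.E = Set.univ) (hNE : N.E = Set.univ) :
    (∀ F, N.IsFlat F → M.IsFlat F) ↔
      ¬ ∃ C D e, M.IsCircuit' C ∧ N.IsCocircuit' D ∧ C ∩ D = {e} :=
  stmt0_general M N hME hNE
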